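/- arXiv:2502.12738 — 6 statements merged into one kernel-verified Lean document; each statement's English description precedes it below -/
import Mathlib

section
/- The average sufficient statistic t̄ lies in the relative interior relint(C) of the polytope C if and only if the empirical KLIEP loss ℓ attains a global minimum, i.e., there exists Δ₀ ∈ ℝ^k such that ℓ(Δ₀) ≤ ℓ(Δ) for all Δ ∈ ℝ^k. (Theorem 1(i).) -/
open scoped RealInnerProductSpace

/-- The empirical KLIEP loss
`ℓ(Δ) = -⟪Δ, t̄⟫ + log((1/n) ∑_j exp ⟪Δ, t_j⟫)`. -/
noncomputable def kliepLoss {k n : ℕ} (tbar : EuclideanSpace ℝ (Fin k))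
    (t : Fin n → EuclideanSpace ℝ (Fin k)) (Δ : EuclideanSpace ℝ (Fin k)) : ℝ :=
  -⟪Δ, tbar⟫ + Real.log ((1 / (n : ℝ)) * ∑ j, Real.exp ⟪Δ, t j⟫)

/-!
Writing `u j = t j - t̄`, the loss is `log (∑ j, exp ⟪Δ, u j⟫) - log n`, so it attains its minimum
iff `g Δ = ∑ j, exp ⟪Δ, u j⟫` does. At a minimiser the gradient `∑ j, exp ⟪Δ, u j⟫ • u j` vanishes,
which writes `t̄` as a convex combination of the `t j` with strictly positive weights. Conversely,
such weights `w` make `∑ j, w j • u j = 0`, so every nonzero `x` in the span of the `u j` has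
`⟪x, u j⟫ > 0` for some `j`; by compactness of the unit sphere `g x ≥ c ‖x‖` on that span, and `g`
is invariant under projection onto it, so `g` attains its minimum. Finally, the points of a
polytope with strictly positive barycentric weights are exactly those of its relative interior.
-/

open Set Filter Topology

section ConvexHull

variable {ι E : Type*} [Fintype ι]

lemma convexHull_range_eq_image_stdSimplex [AddCommGroup E] [Module ℝ E] (u : ι → E) :
    convexHull ℝ (range u) = Fintype.linearCombination ℝ u '' stdSimplex ℝ ι := by
  classical
  rw [← convexHull_rangle_single_eq_stdSimplex, LinearMap.image_convexHull, ← range_comp]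
  congr 2
  ext j
  simp

lemma exists_eq_sum_smul_sub_of_mem_affineSpan [AddCommGroup E] [Module ℝ E] {u : ι → E} {z : E}
    (hz : z ∈ affineSpan ℝ (range u)) (x : E) : ∃ a : ι → ℝ, z - x = ∑ j, a j • (u j - x) := by
  obtain ⟨a, ha1, rfl⟩ := eq_affineCombination_of_mem_affineSpan_of_fintype hz
  refine ⟨a, ?_⟩
  simp [Finset.affineCombination_eq_linear_combination _ _ _ ha1, smul_sub, ← Finset.sum_smul, ha1]

lemma mem_intrinsicInterior_iff_mem_nhdsWithin {𝕜 V P : Type*} [Ring 𝕜] [AddCommGroup V]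
    [Module 𝕜 V] [TopologicalSpace P] [AddTorsor V P] {s : Set P} {x : P} :
    x ∈ intrinsicInterior 𝕜 s ↔ x ∈ affineSpan 𝕜 s ∧ s ∈ 𝓝[affineSpan 𝕜 s] x := by
  constructor
  · rintro ⟨y, hy, rfl⟩
    refine ⟨y.2, mem_of_superset
      (mem_nhds_subtype_iff_nhdsWithin.1 (mem_interior_iff_mem_nhds.1 hy)) ?_⟩
    rintro _ ⟨z, hz, rfl⟩
    exact hz
  · rintro ⟨hxA, hs⟩
    refine ⟨⟨x, hxA⟩, mem_interior_iff_mem_nhds.2 (mem_nhds_subtype_iff_nhdsWithin.2 ?_), rfl⟩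
    exact mem_of_superset (inter_mem self_mem_nhdsWithin hs) fun z ⟨hzA, hzs⟩ =>
      ⟨⟨z, hzA⟩, hzs, rfl⟩

variable [NormedAddCommGroup E] [NormedSpace ℝ E]

lemma eventually_lineMap_mem_of_mem_intrinsicInterior {s : Set E} {x y : E}
    (hx : x ∈ intrinsicInterior ℝ s) (hy : y ∈ affineSpan ℝ s) :
    ∀ᶠ δ in 𝓝 (0 : ℝ), AffineMap.lineMap x y δ ∈ s := by
  obtain ⟨hxA, hs⟩ := mem_intrinsicInterior_iff_mem_nhdsWithin.1 hx
  refine tendsto_nhdsWithin_iff.2 ⟨?_, .of_forall fun δ => AffineMap.lineMap_mem δ hxA hy⟩ hs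
  simpa using (AffineMap.lineMap_continuous (p := x) (q := y)).tendsto (0 : ℝ)

lemma sum_smul_mem_intrinsicInterior_convexHull {u : ι → E} {w : ι → ℝ} (hw : ∀ j, 0 < w j)
    (hw1 : ∑ j, w j = 1) : ∑ j, w j • u j ∈ intrinsicInterior ℝ (convexHull ℝ (range u)) := by
  set x := ∑ j, w j • u j
  set L := Fintype.linearCombination ℝ (fun j => u j - x)
  -- `x + L a` has barycentric coordinates `w + a - (∑ a) w` with respect to `u`
  let coeff : (ι → ℝ) → ι → ℝ := fun a j => w j + a j - (∑ i, a i) * w j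
  have hcoeff (a : ι → ℝ) : x + L a = Fintype.linearCombination ℝ u (coeff a) := by
    simp [L, coeff, Fintype.linearCombination_apply, smul_sub, sub_smul, add_smul, mul_smul,
      Finset.sum_add_distrib, Finset.sum_sub_distrib, ← Finset.sum_smul, ← Finset.smul_sum, x]
    abel
  have hcoeff1 (a : ι → ℝ) : ∑ j, coeff a j = 1 := by
    simp [coeff, Finset.sum_add_distrib, Finset.sum_sub_distrib, ← Finset.mul_sum, hw1]
  set U := {a : ι → ℝ | ∀ j, 0 < coeff a j}
  have hU : IsOpen U := by
    simp only [U, ofPred_forall]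
    exact isOpen_iInter_of_finite fun j => isOpen_lt continuous_const (by fun_prop)
  have hO : L.rangeRestrict '' U ∈ 𝓝 0 :=
    (L.rangeRestrict.isOpenMap_of_finiteDimensional L.surjective_rangeRestrict U hU).mem_nhds
      ⟨0, by simpa [U, coeff] using hw, map_zero _⟩
  obtain ⟨V, hV, hVO⟩ := (mem_nhds_subtype _ _ _).1 hO
  have hxC : x ∈ convexHull ℝ (range u) := by
    rw [convexHull_range_eq_image_stdSimplex]
    exact ⟨w, ⟨fun j => (hw j).le, hw1⟩, rfl⟩
  rw [mem_intrinsicInterior_iff_mem_nhdsWithin, affineSpan_convexHull]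
  refine ⟨convexHull_subset_affineSpan _ hxC, ?_⟩
  have hV' : ∀ᶠ z in 𝓝 x, z - x ∈ V :=
    (continuous_sub_right x).tendsto' x 0 (sub_self x) hV
  filter_upwards [nhdsWithin_le_nhds hV', self_mem_nhdsWithin] with z hzV hzA
  obtain ⟨b, hb⟩ := exists_eq_sum_smul_sub_of_mem_affineSpan hzA x
  obtain ⟨a, haU, ha⟩ := hVO (show (⟨z - x, b, hb.symm⟩ : LinearMap.range L).1 ∈ V from hzV)
  have hLa : L a = z - x := congrArg Subtype.val ha
  rw [convexHull_range_eq_image_stdSimplex]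
  exact ⟨coeff a, ⟨fun j => (haU j).le, hcoeff1 a⟩, by rw [← hcoeff, hLa, add_sub_cancel]⟩

lemma exists_pos_weights_of_mem_intrinsicInterior_convexHull {u : ι → E} {x : E}
    (hx : x ∈ intrinsicInterior ℝ (convexHull ℝ (range u))) :
    ∃ w : ι → ℝ, (∀ j, 0 < w j) ∧ ∑ j, w j = 1 ∧ ∑ j, w j • u j = x := by
  have : Nonempty ι := range_nonempty_iff_nonempty.1 <|
    convexHull_nonempty_iff.1 ⟨x, intrinsicInterior_subset hx⟩
  set m : ℝ := (Fintype.card ι : ℝ)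
  have hm : 0 < m := by positivity
  set c := ∑ j, m⁻¹ • u j
  have hc : c ∈ convexHull ℝ (range u) := by
    rw [convexHull_range_eq_image_stdSimplex]
    exact ⟨fun _ => m⁻¹, ⟨fun _ => by positivity, by simp [m]⟩, rfl⟩
  -- a point just beyond `x` on the ray from the centroid `c` through `x` still lies in the hull
  obtain ⟨δ, hy, hδ⟩ := ((eventually_lineMap_mem_of_mem_intrinsicInterior hx
    (subset_affineSpan ℝ _ hc)).filter_mono nhdsWithin_le_nhds |>.and
      (self_mem_nhdsWithin (s := Iio 0))).exists
  rw [convexHull_range_eq_image_stdSimplex] at hy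
  obtain ⟨q, ⟨hq0, hq1⟩, hq⟩ := hy
  refine ⟨fun j => (q j - δ * m⁻¹) / (1 - δ), fun j => ?_, ?_, ?_⟩
  · have : δ * m⁻¹ < 0 := mul_neg_of_neg_of_pos hδ (inv_pos.2 hm)
    exact div_pos (by linarith [hq0 j]) (by linarith)
  · have hsum : ∑ j, (q j - δ * m⁻¹) = 1 - δ := by
      simp [Finset.sum_sub_distrib, hq1, m]
      field_simp
    rw [← Finset.sum_div, hsum, div_self (by linarith)]
  · rw [Fintype.linearCombination_apply, AffineMap.lineMap_apply, vsub_eq_sub, vadd_eq_add] at hq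
    have hsplit : ∑ j, ((q j - δ * m⁻¹) / (1 - δ)) • u j =
        (1 - δ)⁻¹ • (∑ j, q j • u j - δ • c) := by
      simp [c, div_eq_inv_mul, mul_smul, sub_smul, smul_sub, Finset.smul_sum,
        Finset.sum_sub_distrib]
    rw [hsplit, hq, show δ • (c - x) + x - δ • c = (1 - δ) • x by module, smul_smul,
      inv_mul_cancel₀ (by linarith), one_smul]

theorem mem_intrinsicInterior_convexHull_range_iff {u : ι → E} {x : E} :
    x ∈ intrinsicInterior ℝ (convexHull ℝ (range u)) ↔
      ∃ w : ι → ℝ, (∀ j, 0 < w j) ∧ ∑ j, w j = 1 ∧ ∑ j, w j • u j = x := by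
  refine ⟨exists_pos_weights_of_mem_intrinsicInterior_convexHull, ?_⟩
  rintro ⟨w, hw, hw1, rfl⟩
  exact sum_smul_mem_intrinsicInterior_convexHull hw hw1

end ConvexHull

lemma exists_pos_mul_norm_le_of_posHomogeneous {F : Type*} [NormedAddCommGroup F]
    [NormedSpace ℝ F] [FiniteDimensional ℝ F] {f : F → ℝ} (hf : Continuous f)
    (hhom : ∀ (a : ℝ) (x : F), 0 ≤ a → f (a • x) = a * f x) (hpos : ∀ x ≠ 0, 0 < f x) :
    ∃ c > 0, ∀ x, c * ‖x‖ ≤ f x := by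
  have hf0 : f 0 = 0 := by simpa using hhom 0 0 le_rfl
  cases subsingleton_or_nontrivial F with
  | inl _ => exact ⟨1, one_pos, fun x => by simp [Subsingleton.elim x 0, hf0]⟩
  | inr _ =>
    obtain ⟨s, hs, hmin⟩ := (isCompact_sphere (0 : F) 1).exists_isMinOn
      (NormedSpace.sphere_nonempty.2 zero_le_one) hf.continuousOn
    refine ⟨f s, hpos s (ne_zero_of_mem_unit_sphere ⟨s, hs⟩), fun x => ?_⟩
    rcases eq_or_ne x 0 with rfl | hx
    · simp [hf0]
    have hxs : ‖x‖⁻¹ • x ∈ Metric.sphere (0 : F) 1 := by simp [norm_smul, hx]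
    calc f s * ‖x‖ ≤ f (‖x‖⁻¹ • x) * ‖x‖ := by gcongr; exact hmin hxs
      _ = f x := by
        rw [mul_comm, ← hhom _ _ (norm_nonneg x), smul_smul,
          mul_inv_cancel₀ (norm_ne_zero_iff.2 hx), one_smul]

section SumExpInner

variable {ι E : Type*} [Fintype ι] [NormedAddCommGroup E] [InnerProductSpace ℝ E]

noncomputable def sumExpInner (u : ι → E) (Δ : E) : ℝ :=
  ∑ j, Real.exp ⟪Δ, u j⟫

lemma sumExpInner_pos [Nonempty ι] (u : ι → E) (Δ : E) : 0 < sumExpInner u Δ :=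
  Finset.sum_pos (fun _ _ => Real.exp_pos _) Finset.univ_nonempty

lemma continuous_sumExpInner (u : ι → E) : Continuous (sumExpInner u) := by
  unfold sumExpInner
  fun_prop

lemma hasFDerivAt_sumExpInner (u : ι → E) (Δ : E) :
    HasFDerivAt (sumExpInner u) (innerSL ℝ (∑ j, Real.exp ⟪Δ, u j⟫ • u j)) Δ := by
  have h (j : ι) : HasFDerivAt (fun Δ => Real.exp ⟪Δ, u j⟫)
      (Real.exp ⟪Δ, u j⟫ • innerSL ℝ (u j)) Δ := by
    simp_rw [real_inner_comm (u j)]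
    exact (innerSL ℝ (u j)).hasFDerivAt.exp
  refine (HasFDerivAt.fun_sum (u := Finset.univ) fun j _ => h j).congr_fderiv ?_
  ext v
  simp

lemma sum_exp_inner_smul_eq_zero_of_isLocalMin {u : ι → E} {Δ₀ : E}
    (h : IsLocalMin (sumExpInner u) Δ₀) : ∑ j, Real.exp ⟪Δ₀, u j⟫ • u j = 0 := by
  rw [← norm_eq_zero, ← innerSL_apply_norm ℝ, h.hasFDerivAt_eq_zero (hasFDerivAt_sumExpInner u Δ₀),
    norm_zero]

lemma exists_pos_weights_of_forall_sumExpInner_le [Nonempty ι] {u : ι → E} {Δ₀ : E}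
    (hmin : ∀ Δ, sumExpInner u Δ₀ ≤ sumExpInner u Δ) :
    ∃ w : ι → ℝ, (∀ j, 0 < w j) ∧ ∑ j, w j = 1 ∧ ∑ j, w j • u j = 0 := by
  have hZ := sumExpInner_pos u Δ₀
  refine ⟨fun j => Real.exp ⟪Δ₀, u j⟫ / sumExpInner u Δ₀, fun j => by positivity,
    by rw [← Finset.sum_div]; exact div_self hZ.ne', ?_⟩
  simp_rw [div_eq_inv_mul, mul_smul, ← Finset.smul_sum,
    sum_exp_inner_smul_eq_zero_of_isLocalMin (.of_forall hmin), smul_zero]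

lemma exists_pos_inner_of_mem_span {u : ι → E} {w : ι → ℝ} (hw : ∀ j, 0 < w j)
    (h0 : ∑ j, w j • u j = 0) {x : E} (hx : x ∈ Submodule.span ℝ (range u)) (hx0 : x ≠ 0) :
    ∃ j, 0 < ⟪x, u j⟫ := by
  by_contra! hle
  have hsum : ∑ j, w j * ⟪x, u j⟫ = 0 := by
    simp_rw [← real_inner_smul_right, ← inner_sum, h0, inner_zero_right]
  have hperp : ∀ j, ⟪x, u j⟫ = 0 := fun j =>
    ((mul_eq_zero.1 <| (Finset.sum_eq_zero_iff_of_nonpos fun i _ =>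
      mul_nonpos_of_nonneg_of_nonpos (hw i).le (hle i)).1 hsum j (Finset.mem_univ j))).resolve_left
      (hw j).ne'
  have hxx : x ∈ (ℝ ∙ x)ᗮ := Submodule.span_le.2 (range_subset_iff.2 fun j =>
    Submodule.mem_orthogonal_singleton_iff_inner_right.2 (hperp j)) hx
  exact hx0 (inner_self_eq_zero.1 (Submodule.mem_orthogonal_singleton_iff_inner_right.1 hxx))

lemma sumExpInner_starProjection {u : ι → E} (K : Submodule ℝ E) [K.HasOrthogonalProjection]
    (hu : ∀ j, u j ∈ K) (Δ : E) : sumExpInner u (K.starProjection Δ) = sumExpInner u Δ := by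
  simp_rw [sumExpInner, K.inner_starProjection_left_eq_right, K.starProjection_eq_self_iff.2 (hu _)]

lemma tendsto_sumExpInner_cocompact {u : ι → E} {w : ι → ℝ} (hw : ∀ j, 0 < w j)
    (h0 : ∑ j, w j • u j = 0) :
    Tendsto (fun x : Submodule.span ℝ (range u) => sumExpInner u x) (cocompact _) atTop := by
  have := FiniteDimensional.span_of_finite ℝ (finite_range u)
  obtain ⟨c, hc, hcf⟩ : ∃ c > 0, ∀ x : Submodule.span ℝ (range u),
      c * ‖x‖ ≤ ∑ j, max ⟪(x : E), u j⟫ 0 := by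
    refine exists_pos_mul_norm_le_of_posHomogeneous (by fun_prop) (fun a x ha => ?_) fun x hx => ?_
    · simp [real_inner_smul_left, Finset.mul_sum, mul_max_of_nonneg _ _ ha]
    · obtain ⟨j, hj⟩ := exists_pos_inner_of_mem_span hw h0 x.2 (by simpa using hx)
      exact hj.trans_le <| (le_max_left _ _).trans <|
        Finset.single_le_sum (f := fun i => max ⟪(x : E), u i⟫ 0) (fun i _ => le_max_right _ _)
          (Finset.mem_univ j)
  -- `exp a ≥ max a 0` turns the linear lower bound into coercivity
  have hle (x : Submodule.span ℝ (range u)) : c * ‖x‖ ≤ sumExpInner u x :=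
    (hcf x).trans <| Finset.sum_le_sum fun j _ =>
      max_le (by linarith [Real.add_one_le_exp ⟪(x : E), u j⟫]) (Real.exp_pos _).le
  exact tendsto_atTop_mono hle (tendsto_norm_cocompact_atTop.const_mul_atTop hc)

lemma exists_forall_sumExpInner_le {u : ι → E} {w : ι → ℝ} (hw : ∀ j, 0 < w j)
    (h0 : ∑ j, w j • u j = 0) : ∃ Δ₀, ∀ Δ, sumExpInner u Δ₀ ≤ sumExpInner u Δ := by
  set K := Submodule.span ℝ (range u)
  have : FiniteDimensional ℝ K := .span_of_finite ℝ (finite_range u)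
  obtain ⟨x₀, hx₀⟩ := ((continuous_sumExpInner u).comp continuous_subtype_val).exists_forall_le
    (tendsto_sumExpInner_cocompact hw h0)
  refine ⟨x₀, fun Δ => (hx₀ ⟨K.starProjection Δ, K.starProjection_apply_mem Δ⟩).trans_eq ?_⟩
  exact sumExpInner_starProjection K (fun j => Submodule.subset_span (mem_range_self j)) Δ

end SumExpInner

lemma kliepLoss_eq_log_sumExpInner {k n : ℕ} (hn : 1 ≤ n) (tbar : EuclideanSpace ℝ (Fin k))
    (t : Fin n → EuclideanSpace ℝ (Fin k)) (Δ : EuclideanSpace ℝ (Fin k)) :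
    kliepLoss tbar t Δ = Real.log (sumExpInner (fun j => t j - tbar) Δ) - Real.log n := by
  have : Nonempty (Fin n) := ⟨⟨0, hn⟩⟩
  have hsum : ∑ j, Real.exp ⟪Δ, t j⟫ =
      Real.exp ⟪Δ, tbar⟫ * sumExpInner (fun j => t j - tbar) Δ := by
    simp [sumExpInner, Finset.mul_sum, ← Real.exp_add, inner_sub_right]
  have hn0 : 1 / (n : ℝ) ≠ 0 := one_div_ne_zero (by exact_mod_cast (by omega : n ≠ 0))
  have hS := (sumExpInner_pos (fun j => t j - tbar) Δ).ne'
  rw [kliepLoss, hsum, mul_left_comm, Real.log_mul (Real.exp_ne_zero _) (mul_ne_zero hn0 hS),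
    Real.log_exp, Real.log_mul hn0 hS, one_div, Real.log_inv]
  ring

lemma kliepLoss_le_kliepLoss_iff {k n : ℕ} (hn : 1 ≤ n) (tbar : EuclideanSpace ℝ (Fin k))
    (t : Fin n → EuclideanSpace ℝ (Fin k)) (Δ₀ Δ : EuclideanSpace ℝ (Fin k)) :
    kliepLoss tbar t Δ₀ ≤ kliepLoss tbar t Δ ↔
      sumExpInner (fun j => t j - tbar) Δ₀ ≤ sumExpInner (fun j => t j - tbar) Δ := by
  have : Nonempty (Fin n) := ⟨⟨0, hn⟩⟩
  rw [kliepLoss_eq_log_sumExpInner hn, kliepLoss_eq_log_sumExpInner hn, sub_le_sub_iff_right,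
    Real.log_le_log_iff (sumExpInner_pos _ _) (sumExpInner_pos _ _)]

theorem kliep_attains_min_iff_relint_general {k n : ℕ} (hn : 1 ≤ n)
    (tbar : EuclideanSpace ℝ (Fin k)) (t : Fin n → EuclideanSpace ℝ (Fin k)) :
    tbar ∈ intrinsicInterior ℝ (convexHull ℝ (Set.range t)) ↔
      ∃ Δ₀ : EuclideanSpace ℝ (Fin k), ∀ Δ : EuclideanSpace ℝ (Fin k),
        kliepLoss tbar t Δ₀ ≤ kliepLoss tbar t Δ := by
  have : Nonempty (Fin n) := ⟨⟨0, hn⟩⟩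
  have hcentre (w : Fin n → ℝ) (hw1 : ∑ j, w j = 1) :
      ∑ j, w j • (t j - tbar) = 0 ↔ ∑ j, w j • t j = tbar := by
    simp [smul_sub, Finset.sum_sub_distrib, ← Finset.sum_smul, hw1, sub_eq_zero]
  simp_rw [kliepLoss_le_kliepLoss_iff hn, mem_intrinsicInterior_convexHull_range_iff]
  constructor
  · rintro ⟨w, hw, hw1, hwt⟩
    exact exists_forall_sumExpInner_le hw ((hcentre w hw1).2 hwt)
  · rintro ⟨Δ₀, hΔ₀⟩
    obtain ⟨w, hw, hw1, hwu⟩ := exists_pos_weights_of_forall_sumExpInner_le hΔ₀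
    exact ⟨w, hw, hw1, (hcentre w hw1).1 hwu⟩

/-- Theorem 1(i): `t̄ ∈ relint(C)` iff the empirical KLIEP loss attains a global minimum. -/
theorem kliep_attains_min_iff_relint {k n : ℕ} (hk : 1 ≤ k) (hn : 1 ≤ n)
    (tbar : EuclideanSpace ℝ (Fin k)) (t : Fin n → EuclideanSpace ℝ (Fin k)) :
    tbar ∈ intrinsicInterior ℝ (convexHull ℝ (Set.range t)) ↔
      ∃ Δ₀ : EuclideanSpace ℝ (Fin k), ∀ Δ : EuclideanSpace ℝ (Fin k),
        kliepLoss tbar t Δ₀ ≤ kliepLoss tbar t Δ :=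
  kliep_attains_min_iff_relint_general hn tbar t
end

section
/- The average sufficient statistic t̄ lies outside the polytope C if and only if the empirical KLIEP loss ℓ is unbounded from below, i.e., for every M ∈ ℝ there exists Δ ∈ ℝ^k with ℓ(Δ) < M. (Theorem 1(iii).) -/
open scoped RealInnerProductSpace

/-!
If `t̄ ∈ C`, then `⟪Δ, t̄⟫ ≤ maxⱼ ⟪Δ, tⱼ⟫ ≤ log ∑ⱼ exp ⟪Δ, tⱼ⟫` for every `Δ`, so `ℓ ≥ -log n`.
If `t̄ ∉ C`, a vector `v` strictly separates `t̄` from the compact convex set `C`, and along the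
ray `c • v` the loss decreases at least linearly in `c`.
-/

namespace Real

variable {ι : Type*} [Fintype ι]

theorem le_log_sum_exp (f : ι → ℝ) (j : ι) : f j ≤ log (∑ i, exp (f i)) :=
  (le_log_iff_exp_le (Finset.sum_pos (fun i _ => exp_pos (f i)) ⟨j, Finset.mem_univ j⟩)).2 <|
    Finset.single_le_sum (fun i _ => (exp_pos (f i)).le) (Finset.mem_univ j)

theorem log_sum_exp_le [Nonempty ι] {f : ι → ℝ} {u : ℝ} (h : ∀ i, f i ≤ u) :
    log (∑ i, exp (f i)) ≤ u + log (Fintype.card ι) := by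
  have hsum : ∑ i, exp (f i) ≤ Fintype.card ι * exp u := by
    simpa using Finset.sum_le_sum fun i (_ : i ∈ Finset.univ) => exp_le_exp.2 (h i)
  calc log (∑ i, exp (f i)) ≤ log (Fintype.card ι * exp u) :=
        log_le_log (Finset.sum_pos (fun i _ => exp_pos (f i)) Finset.univ_nonempty) hsum
    _ = u + log (Fintype.card ι) := by
        rw [log_mul (by positivity) (exp_pos u).ne', log_exp, add_comm]

end Real

theorem exists_inner_lt_of_notMem_closed_convex {F : Type*} [NormedAddCommGroup F]
    [InnerProductSpace ℝ F] [CompleteSpace F] {s : Set F} {x : F}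
    (hconv : Convex ℝ s) (hclosed : IsClosed s) (hx : x ∉ s) :
    ∃ (v : F) (u : ℝ), (∀ a ∈ s, ⟪v, a⟫ < u) ∧ u < ⟪v, x⟫ := by
  obtain ⟨f, u, hs, hfx⟩ := geometric_hahn_banach_closed_point hconv hclosed hx
  refine ⟨(InnerProductSpace.toDual ℝ F).symm f, u, fun a ha => ?_, ?_⟩
  · simpa only [InnerProductSpace.toDual_symm_apply] using hs a ha
  · simpa only [InnerProductSpace.toDual_symm_apply] using hfx

section KLIEP

variable {k n : ℕ} (tbar : EuclideanSpace ℝ (Fin k)) (t : Fin n → EuclideanSpace ℝ (Fin k))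

theorem kliepLoss_eq (hn : 1 ≤ n) (Δ : EuclideanSpace ℝ (Fin k)) :
    kliepLoss tbar t Δ = Real.log (∑ j, Real.exp ⟪Δ, t j⟫) - ⟪Δ, tbar⟫ - Real.log n := by
  have : Nonempty (Fin n) := ⟨⟨0, hn⟩⟩
  rw [kliepLoss, Real.log_mul (by positivity)
      (Finset.sum_pos (fun j _ => Real.exp_pos _) Finset.univ_nonempty).ne',
    one_div, Real.log_inv]
  ring

theorem inner_le_log_sum_exp_of_mem_convexHull {Δ x : EuclideanSpace ℝ (Fin k)}
    (hx : x ∈ convexHull ℝ (Set.range t)) : ⟪Δ, x⟫ ≤ Real.log (∑ j, Real.exp ⟪Δ, t j⟫) := by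
  refine convexHull_min ?_ (convex_halfSpace_le (innerₛₗ ℝ Δ).isLinear _) hx
  rintro _ ⟨j, rfl⟩
  exact Real.le_log_sum_exp (fun i => ⟪Δ, t i⟫) j

theorem neg_log_le_kliepLoss_of_mem_convexHull (hn : 1 ≤ n)
    (htbar : tbar ∈ convexHull ℝ (Set.range t)) (Δ : EuclideanSpace ℝ (Fin k)) :
    -Real.log n ≤ kliepLoss tbar t Δ := by
  rw [kliepLoss_eq tbar t hn]
  linarith [inner_le_log_sum_exp_of_mem_convexHull t (Δ := Δ) htbar]

theorem kliepLoss_smul_le (hn : 1 ≤ n) {v : EuclideanSpace ℝ (Fin k)} {u c : ℝ}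
    (hu : ∀ j, ⟪v, t j⟫ ≤ u) (hc : 0 ≤ c) :
    kliepLoss tbar t (c • v) ≤ c * (u - ⟪v, tbar⟫) := by
  have : Nonempty (Fin n) := ⟨⟨0, hn⟩⟩
  have hlse := Real.log_sum_exp_le (f := fun j => ⟪c • v, t j⟫) (u := c * u) fun j => by
    simpa only [real_inner_smul_left] using mul_le_mul_of_nonneg_left (hu j) hc
  rw [kliepLoss_eq tbar t hn, real_inner_smul_left]
  simp only [Fintype.card_fin] at hlse
  linarith

end KLIEP

theorem kliep_unbounded_iff_not_mem_hull_general {k n : ℕ} (hn : 1 ≤ n)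
    (tbar : EuclideanSpace ℝ (Fin k)) (t : Fin n → EuclideanSpace ℝ (Fin k)) :
    tbar ∉ convexHull ℝ (Set.range t) ↔
      ∀ M : ℝ, ∃ Δ : EuclideanSpace ℝ (Fin k), kliepLoss tbar t Δ < M := by
  constructor
  · intro hout M
    obtain ⟨v, u, hC, hv⟩ := exists_inner_lt_of_notMem_closed_convex (convex_convexHull ℝ _)
      ((Set.finite_range t).isCompact_convexHull (𝕜 := ℝ)).isClosed hout
    have hgap : 0 < ⟪v, tbar⟫ - u := sub_pos.2 hv
    have hu : ∀ j, ⟪v, t j⟫ ≤ u := fun j =>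
      (hC _ (subset_convexHull ℝ _ (Set.mem_range_self j))).le
    set c := (|M| + 1) / (⟪v, tbar⟫ - u)
    refine ⟨c • v, (kliepLoss_smul_le tbar t hn hu (by positivity)).trans_lt ?_⟩
    have : c * (u - ⟪v, tbar⟫) = -(|M| + 1) := by
      rw [← neg_sub, mul_neg, div_mul_cancel₀ _ hgap.ne']
    linarith [le_abs_self M, neg_abs_le M]
  · intro hunbdd hmem
    obtain ⟨Δ, hΔ⟩ := hunbdd (-Real.log n)
    exact (neg_log_le_kliepLoss_of_mem_convexHull tbar t hn hmem Δ).not_gt hΔ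

/-- Theorem 1(iii): `t̄ ∉ C` iff the empirical KLIEP loss is unbounded from below. -/
theorem kliep_unbounded_iff_not_mem_hull {k n : ℕ} (hk : 1 ≤ k) (hn : 1 ≤ n)
    (tbar : EuclideanSpace ℝ (Fin k)) (t : Fin n → EuclideanSpace ℝ (Fin k)) :
    tbar ∉ convexHull ℝ (Set.range t) ↔
      ∀ M : ℝ, ∃ Δ : EuclideanSpace ℝ (Fin k), kliepLoss tbar t Δ < M :=
  kliep_unbounded_iff_not_mem_hull_general hn tbar t
end

section
/- Suppose t̄ is a strictly positive convex combination of the points t_1, …, t_n, i.e., t̄ = ∑_{j=1}^n α_j t_j for some α_1, …, α_n > 0 with ∑_{j=1}^n α_j = 1. Let U = span{t_1 − t̄, …, t_n − t̄}. Then the restriction of the empirical KLIEP loss ℓ to U is coercive: for every M ∈ ℝ there exists R > 0 such that ℓ(Δ) ≥ M for all Δ ∈ U with ‖Δ‖ ≥ R. -/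
set_option maxHeartbeats 1000000


open scoped RealInnerProductSpace

/-- If `t̄` is a strictly positive convex combination of the `t_j`, then the restriction of the
empirical KLIEP loss to `U = span{t_1 - t̄, …, t_n - t̄}` is coercive. -/
theorem kliep_coercive_on_span {k n : ℕ} (hk : 1 ≤ k) (hn : 1 ≤ n)
    (tbar : EuclideanSpace ℝ (Fin k)) (t : Fin n → EuclideanSpace ℝ (Fin k))
    (α : Fin n → ℝ) (hα : ∀ j, 0 < α j) (hsum : ∑ j, α j = 1)
    (hcomb : tbar = ∑ j, α j • t j) :
    ∀ M : ℝ, ∃ R : ℝ, 0 < R ∧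
      ∀ Δ ∈ Submodule.span ℝ (Set.range fun j => t j - tbar),
        R ≤ ‖Δ‖ → M ≤ kliepLoss tbar t Δ := by
  classical
  intro M
  have hn0 : 0 < n := hn
  haveI : Nonempty (Fin n) := ⟨⟨0, hn0⟩⟩
  have hne : (Finset.univ : Finset (Fin n)).Nonempty := Finset.univ_nonempty
  set U : Submodule ℝ (EuclideanSpace ℝ (Fin k)) := Submodule.span ℝ (Set.range fun j => t j - tbar) with hU
  set g : EuclideanSpace ℝ (Fin k) → ℝ := fun Δ => Finset.univ.sup' hne fun j => ⟪Δ, t j - tbar⟫ with hg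
  -- lower bound for the loss
  have hlb : ∀ Δ : EuclideanSpace ℝ (Fin k), g Δ - Real.log n ≤ kliepLoss tbar t Δ := by
    intro Δ
    obtain ⟨j0, -, hj0⟩ := Finset.exists_mem_eq_sup' hne fun j => ⟪Δ, t j - tbar⟫
    have hpos : (0:ℝ) < (1 / (n : ℝ)) * Real.exp ⟪Δ, t j0⟫ := by positivity
    have hsum' : (1 / (n : ℝ)) * Real.exp ⟪Δ, t j0⟫ ≤ (1 / (n : ℝ)) * ∑ j, Real.exp ⟪Δ, t j⟫ := by
      have : Real.exp ⟪Δ, t j0⟫ ≤ ∑ j, Real.exp ⟪Δ, t j⟫ :=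
        Finset.single_le_sum (f := fun j => Real.exp ⟪Δ, t j⟫)
          (fun j _ => (Real.exp_pos _).le) (Finset.mem_univ j0)
      have h1n : (0:ℝ) ≤ 1 / (n:ℝ) := by positivity
      exact mul_le_mul_of_nonneg_left this h1n
    have hlog : Real.log ((1 / (n : ℝ)) * Real.exp ⟪Δ, t j0⟫)
        ≤ Real.log ((1 / (n : ℝ)) * ∑ j, Real.exp ⟪Δ, t j⟫) :=
      Real.log_le_log hpos hsum'
    have heq : Real.log ((1 / (n : ℝ)) * Real.exp ⟪Δ, t j0⟫)
        = -Real.log n + ⟪Δ, t j0⟫ := by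
      rw [Real.log_mul (by positivity) (Real.exp_ne_zero _), Real.log_exp, one_div,
        Real.log_inv]
    have : g Δ = ⟪Δ, t j0⟫ - ⟪Δ, tbar⟫ := by
      simp only [hg]; rw [hj0, inner_sub_right]
    rw [this, kliepLoss]
    have := heq ▸ hlog
    linarith
  -- homogeneity of g
  have hhom : ∀ (c : ℝ), 0 ≤ c → ∀ Δ : EuclideanSpace ℝ (Fin k), g (c • Δ) = c * g Δ := by
    intro c hc Δ
    rw [hg]
    simp only [real_inner_smul_left]
    exact (Finset.comp_sup'_eq_sup'_comp hne (fun x => c * x)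
      (fun x y => mul_max_of_nonneg x y hc)).symm
  -- positivity of g on the unit sphere of U
  have hgpos : ∀ u : EuclideanSpace ℝ (Fin k), u ∈ U → ‖u‖ = 1 → 0 < g u := by
    intro u huU hu1
    by_contra h
    push_neg at h
    have hle : ∀ j : Fin n, ⟪u, t j - tbar⟫ ≤ 0 := fun j =>
      le_trans (Finset.le_sup' (fun j => ⟪u, t j - tbar⟫) (Finset.mem_univ j)) h
    have hibar : ⟪u, tbar⟫ = ∑ j, α j * ⟪u, t j⟫ := by
      rw [hcomb, inner_sum]
      simp only [real_inner_smul_right]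
    have hzero : ∑ j, α j * ⟪u, t j - tbar⟫ = 0 := by
      simp only [inner_sub_right, mul_sub]
      rw [Finset.sum_sub_distrib, ← Finset.sum_mul, hsum, one_mul, hibar]
      ring
    have hterm : ∀ j : Fin n, ⟪u, t j - tbar⟫ = 0 := by
      intro j
      have h0 : ∀ i ∈ Finset.univ, α i * ⟪u, t i - tbar⟫ ≤ 0 := fun i _ =>
        mul_nonpos_of_nonneg_of_nonpos (hα i).le (hle i)
      have := (Finset.sum_eq_zero_iff_of_nonpos h0).mp hzero j (Finset.mem_univ j)
      have hαj := (hα j).ne'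
      exact (mul_eq_zero.mp this).resolve_left hαj
    obtain ⟨c, hc⟩ := (Submodule.mem_span_range_iff_exists_fun ℝ).mp huU
    have : ⟪u, u⟫ = 0 := by
      nth_rewrite 2 [← hc]
      rw [inner_sum]
      simp only [real_inner_smul_right, hterm, mul_zero, Finset.sum_const_zero]
    have : u = 0 := inner_self_eq_zero.mp this
    rw [this] at hu1
    simp at hu1
  -- split on whether U is trivial
  by_cases hbot : U = ⊥
  · refine ⟨1, one_pos, fun Δ hΔ hR => ?_⟩
    rw [hbot, Submodule.mem_bot] at hΔ
    rw [hΔ, norm_zero] at hR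
    linarith
  · -- the unit sphere of U is nonempty and compact
    obtain ⟨u0, hu0U, hu0⟩ := Submodule.exists_mem_ne_zero_of_ne_bot hbot
    set S : Set (EuclideanSpace ℝ (Fin k)) := Metric.sphere 0 1 ∩ ↑U with hS
    have hSne : S.Nonempty := by
      refine ⟨‖u0‖⁻¹ • u0, ?_, U.smul_mem _ hu0U⟩
      simp [norm_smul, norm_inv, inv_mul_cancel₀ (norm_ne_zero_iff.mpr hu0)]
    have hScomp : IsCompact S :=
      (isCompact_sphere (0:EuclideanSpace ℝ (Fin k)) 1).inter_right (Submodule.closed_of_finiteDimensional U)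
    have hgcont : Continuous g := by
      apply Continuous.finset_sup'_apply hne
      intro i _
      exact (continuous_id.inner continuous_const : Continuous fun Δ : EuclideanSpace ℝ (Fin k) => ⟪Δ, t i - tbar⟫)
    obtain ⟨u, huS, humin'⟩ := hScomp.exists_isMinOn hSne hgcont.continuousOn
    have huU : u ∈ U := huS.2
    have hu1 : ‖u‖ = 1 := by
      have := huS.1
      simpa [mem_sphere_iff_norm] using this
    set c := g u with hc
    have hcpos : 0 < c := hgpos u huU hu1
    refine ⟨max 1 ((M + Real.log n) / c + 1), lt_of_lt_of_le one_pos (le_max_left _ _),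
      fun Δ hΔ hR => ?_⟩
    have hΔ1 : (1:ℝ) ≤ ‖Δ‖ := le_trans (le_max_left _ _) hR
    have hΔne : Δ ≠ 0 := by
      intro h; rw [h, norm_zero] at hΔ1; linarith
    have hΔpos : (0:ℝ) < ‖Δ‖ := by linarith
    set w : EuclideanSpace ℝ (Fin k) := ‖Δ‖⁻¹ • Δ with hw
    have hwS : w ∈ S := by
      constructor
      · simp [hw, norm_smul, norm_inv, inv_mul_cancel₀ hΔpos.ne', mem_sphere_iff_norm]
      · exact U.smul_mem _ hΔ
    have hgw : c ≤ g w := humin' hwS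
    have hΔw : Δ = ‖Δ‖ • w := by
      rw [hw, smul_smul, mul_inv_cancel₀ hΔpos.ne', one_smul]
    have hgΔ : g Δ = ‖Δ‖ * g w := by
      conv_lhs => rw [hΔw]
      exact hhom _ hΔpos.le w
    have hRc : (M + Real.log n) / c + 1 ≤ ‖Δ‖ := le_trans (le_max_right _ _) hR
    have key : M + Real.log n ≤ g Δ := by
      rw [hgΔ]
      have h1 : ‖Δ‖ * c ≤ ‖Δ‖ * g w := mul_le_mul_of_nonneg_left hgw hΔpos.le
      have h2 : ((M + Real.log n) / c + 1) * c ≤ ‖Δ‖ * c :=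
        mul_le_mul_of_nonneg_right hRc hcpos.le
      have h3 : ((M + Real.log n) / c + 1) * c = M + Real.log n + c := by
        field_simp
      nlinarith
    linarith [hlb Δ]
end

section
/- If t̄ ∈ relint(C), then for every λ ≥ 0 the norm-penalized KLIEP loss ℓ_λ(Δ) = ℓ(Δ) + λ·N(Δ) attains a global minimum, i.e., there exists Δ₀ ∈ ℝ^k with ℓ_λ(Δ₀) ≤ ℓ_λ(Δ) for all Δ ∈ ℝ^k. (Theorem 2(i).) -/
/-!
Since `t̄ ∈ C`, some `⟪Δ, t_j⟫` is at least `⟪Δ, t̄⟫`, so `ℓ ≥ -log n`. For `λ > 0`, the penalty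
`λ • N` dominates a positive multiple of the Euclidean norm (`N` is convex, hence continuous, and
positive on the compact unit sphere), so `ℓ_λ` is coercive. For `λ = 0`, `ℓ` is invariant under
translations orthogonal to `V = span {t_j - t̄}`, and on `V` it grows linearly: `t̄ ∈ relint C`
makes `max_j ⟪u, t_j - t̄⟫` positive on the unit sphere of `V`, hence at least some `c > 0`.
-/

open scoped RealInnerProductSpace

open Filter Set Topology Real

section Normed

variable {E : Type*} [NormedAddCommGroup E]

theorem Continuous.exists_forall_le_of_le_add_mul_norm [ProperSpace E] {f : E → ℝ}
    (hf : Continuous f) {a c : ℝ} (hc : 0 < c) (hle : ∀ x, a + c * ‖x‖ ≤ f x) :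
    ∃ x₀, ∀ x, f x₀ ≤ f x :=
  hf.exists_forall_le <| tendsto_atTop_mono hle <|
    tendsto_atTop_add_const_left _ a (tendsto_norm_cocompact_atTop.const_mul_atTop hc)

variable [NormedSpace ℝ E]

theorem exists_pos_mul_norm_le_of_homogeneous [ProperSpace E] {f : E → ℝ} (hf : Continuous f)
    (hsmul : ∀ c : ℝ, 0 ≤ c → ∀ x, f (c • x) = c * f x) (hpos : ∀ x, x ≠ 0 → 0 < f x) :
    ∃ c > 0, ∀ x, c * ‖x‖ ≤ f x := by
  have hf0 : f 0 = 0 := by simpa using hsmul 0 le_rfl 0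
  rcases subsingleton_or_nontrivial E with _ | _
  · exact ⟨1, one_pos, fun x => by simp [Subsingleton.elim x 0, hf0]⟩
  obtain ⟨u, hu, hmin⟩ := (isCompact_sphere (0 : E) 1).exists_isMinOn
    (NormedSpace.sphere_nonempty.mpr zero_le_one) hf.continuousOn
  have hu0 : u ≠ 0 := ne_zero_of_mem_sphere one_ne_zero ⟨u, hu⟩
  refine ⟨f u, hpos u hu0, fun x => ?_⟩
  rcases eq_or_ne x 0 with rfl | hx
  · simp [hf0]
  have hx' : ‖x‖⁻¹ • x ∈ Metric.sphere (0 : E) 1 :=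
    mem_sphere_zero_iff_norm.mpr (norm_smul_inv_norm hx)
  calc f u * ‖x‖ ≤ f (‖x‖⁻¹ • x) * ‖x‖ := by gcongr; exact hmin hx'
    _ = f x := by
      rw [hsmul _ (inv_nonneg.mpr (norm_nonneg x))]
      field_simp

theorem exists_pos_add_smul_mem_of_mem_intrinsicInterior {s : Set E} {x u : E}
    (hx : x ∈ intrinsicInterior ℝ s) (hu : u ∈ (affineSpan ℝ s).direction) :
    ∃ ε : ℝ, 0 < ε ∧ x + ε • u ∈ s := by
  obtain ⟨y, hy, rfl⟩ := mem_intrinsicInterior.mp hx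
  let line : ℝ → affineSpan ℝ s := fun ε =>
    ⟨ε • u +ᵥ (y : E), AffineSubspace.vadd_mem_of_mem_direction (Submodule.smul_mem _ ε hu) y.2⟩
  have hline : Continuous line := by fun_prop
  have h0 : line 0 = y := by ext; simp [line]
  have hnear : ∀ᶠ ε in 𝓝 (0 : ℝ), line ε ∈ interior (Subtype.val ⁻¹' s) :=
    hline.continuousAt.preimage_mem_nhds (h0 ▸ isOpen_interior.mem_nhds hy)
  obtain ⟨ε, hε, hεpos⟩ :=
    ((hnear.filter_mono nhdsWithin_le_nhds).and (self_mem_nhdsWithin (s := Ioi 0))).exists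
  exact ⟨ε, hεpos, by simpa [line, add_comm] using interior_subset hε⟩

variable [FiniteDimensional ℝ E]

theorem Seminorm.continuous_of_finiteDimensional (p : Seminorm ℝ E) : Continuous p :=
  p.convexOn.locallyLipschitz.continuous

theorem Seminorm.exists_pos_mul_norm_le (p : Seminorm ℝ E) (hp : ∀ x, p x = 0 → x = 0) :
    ∃ c > 0, ∀ x, c * ‖x‖ ≤ p x :=
  exists_pos_mul_norm_le_of_homogeneous p.continuous_of_finiteDimensional
    (fun c hc x => by rw [map_smul_eq_mul, Real.norm_of_nonneg hc])
    (fun x hx => (apply_nonneg p x).lt_of_ne' (mt (hp x) hx))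

end Normed

section Convex

variable {E : Type*} [AddCommGroup E] [Module ℝ E]

theorem nonempty_of_mem_convexHull_range {ι : Type*} {t : ι → E} {x : E}
    (hx : x ∈ convexHull ℝ (range t)) : Nonempty ι :=
  range_nonempty_iff_nonempty.mp (convexHull_nonempty_iff.mp ⟨x, hx⟩)

theorem sub_mem_vectorSpan_of_mem_convexHull {s : Set E} {x y : E} (hx : x ∈ convexHull ℝ s)
    (hy : y ∈ s) : y - x ∈ vectorSpan ℝ s :=
  vsub_mem_vectorSpan_of_mem_affineSpan_of_mem_affineSpan (mem_affineSpan ℝ hy)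
    (convexHull_subset_affineSpan s hx)

end Convex

section Inner

variable {E : Type*} [NormedAddCommGroup E] [InnerProductSpace ℝ E]

theorem exists_inner_le_inner_of_mem_convexHull {s : Set E} {x : E} (hx : x ∈ convexHull ℝ s)
    (u : E) : ∃ y ∈ s, ⟪u, x⟫ ≤ ⟪u, y⟫ :=
  ((innerₛₗ ℝ u).convexOn (convex_convexHull ℝ s)).exists_ge_of_mem_convexHull
    (subset_convexHull ℝ s) hx

theorem exists_inner_sub_pos_of_mem_intrinsicInterior_convexHull {s : Set E} {x u : E}
    (hx : x ∈ intrinsicInterior ℝ (convexHull ℝ s)) (hu : u ∈ vectorSpan ℝ s) (hu0 : u ≠ 0) :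
    ∃ y ∈ s, 0 < ⟪u, y - x⟫ := by
  rw [← direction_affineSpan, ← affineSpan_convexHull] at hu
  obtain ⟨ε, hε, hmem⟩ := exists_pos_add_smul_mem_of_mem_intrinsicInterior hx hu
  obtain ⟨y, hy, hle⟩ := exists_inner_le_inner_of_mem_convexHull hmem u
  refine ⟨y, hy, ?_⟩
  rw [inner_add_right, real_inner_smul_right, real_inner_self_eq_norm_sq] at hle
  rw [inner_sub_right]
  have := mul_pos hε (pow_pos (norm_pos_iff.mpr hu0) 2)
  linarith

end Inner

section Kliep

variable {k n : ℕ} (tbar : EuclideanSpace ℝ (Fin k)) (t : Fin n → EuclideanSpace ℝ (Fin k))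

theorem one_div_mul_sum_exp_inner_pos [Nonempty (Fin n)] (Δ : EuclideanSpace ℝ (Fin k)) :
    0 < 1 / (n : ℝ) * ∑ j, exp ⟪Δ, t j⟫ :=
  mul_pos (by simpa using Fin.pos_iff_nonempty.mpr ‹_›)
    (Finset.sum_pos (fun _ _ => exp_pos _) Finset.univ_nonempty)

theorem continuous_kliepLoss [Nonempty (Fin n)] : Continuous (kliepLoss tbar t) :=
  (continuous_id.inner continuous_const).neg.add <|
    (continuous_const.mul (continuous_finsetSum _ fun _ _ =>
      (continuous_id.inner continuous_const).rexp)).log fun Δ =>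
        (one_div_mul_sum_exp_inner_pos t Δ).ne'

theorem kliepLoss_add_of_inner_eq [Nonempty (Fin n)] {w : EuclideanSpace ℝ (Fin k)}
    (hw : ∀ j, ⟪w, t j⟫ = ⟪w, tbar⟫) (Δ : EuclideanSpace ℝ (Fin k)) :
    kliepLoss tbar t (Δ + w) = kliepLoss tbar t Δ := by
  have hsum : ∑ j, exp ⟪Δ + w, t j⟫ = exp ⟪w, tbar⟫ * ∑ j, exp ⟪Δ, t j⟫ := by
    rw [Finset.mul_sum]
    congr! 1 with j
    rw [inner_add_left, hw, ← exp_add, add_comm]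
  rw [kliepLoss, kliepLoss, hsum, mul_left_comm,
    log_mul (exp_ne_zero _) (one_div_mul_sum_exp_inner_pos t Δ).ne',
    log_exp, inner_add_left]
  ring

theorem inner_sub_sub_log_le_kliepLoss (Δ : EuclideanSpace ℝ (Fin k)) (j : Fin n) :
    ⟪Δ, t j - tbar⟫ - log n ≤ kliepLoss tbar t Δ := by
  have hn : (0 : ℝ) < n := by exact_mod_cast j.pos
  have hexp : exp ⟪Δ, t j⟫ ≤ ∑ i, exp ⟪Δ, t i⟫ :=
    Finset.single_le_sum (f := fun i => exp ⟪Δ, t i⟫) (fun _ _ => (exp_pos _).le)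
      (Finset.mem_univ j)
  have hlog : ⟪Δ, t j⟫ - log n ≤ log ((1 / n) * ∑ i, exp ⟪Δ, t i⟫) :=
    calc ⟪Δ, t j⟫ - log n = log ((1 / n) * exp ⟪Δ, t j⟫) := by
          rw [log_mul (by positivity) (exp_ne_zero _), log_exp, one_div, log_inv]; ring
      _ ≤ _ := log_le_log (by positivity) (by gcongr)
  rw [kliepLoss, inner_sub_right]
  linarith

theorem neg_log_le_kliepLoss (htbar : tbar ∈ convexHull ℝ (range t))
    (Δ : EuclideanSpace ℝ (Fin k)) : -log n ≤ kliepLoss tbar t Δ := by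
  obtain ⟨_, ⟨j, rfl⟩, hj⟩ := exists_inner_le_inner_of_mem_convexHull htbar Δ
  have := inner_sub_sub_log_le_kliepLoss tbar t Δ j
  rw [inner_sub_right] at this
  linarith

theorem exists_pos_mul_norm_sub_log_le_kliepLoss
    (hmem : tbar ∈ intrinsicInterior ℝ (convexHull ℝ (range t))) :
    ∃ c > 0, ∀ x ∈ vectorSpan ℝ (range t), c * ‖x‖ - log n ≤ kliepLoss tbar t x := by
  have := nonempty_of_mem_convexHull_range (intrinsicInterior_subset hmem)
  let gap : vectorSpan ℝ (range t) → ℝ := fun x =>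
    Finset.univ.sup' Finset.univ_nonempty fun j => ⟪(x : EuclideanSpace ℝ (Fin k)), t j - tbar⟫
  obtain ⟨c, hc, hgap⟩ := exists_pos_mul_norm_le_of_homogeneous (f := gap)
    (Continuous.finset_sup'_apply _ fun j _ => continuous_subtype_val.inner continuous_const)
    (fun c hc x => by
      simp only [gap, Submodule.coe_smul, real_inner_smul_left]
      exact (Finset.mul₀_sup' hc _ _ _).symm)
    (fun x hx => by
      obtain ⟨_, ⟨j, rfl⟩, hj⟩ :=
        exists_inner_sub_pos_of_mem_intrinsicInterior_convexHull hmem x.2 (by simpa using hx)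
      exact hj.trans_le (Finset.le_sup' (fun j => ⟪(x : EuclideanSpace ℝ (Fin k)), t j - tbar⟫)
        (Finset.mem_univ j)))
  refine ⟨c, hc, fun x hx => ?_⟩
  obtain ⟨j, -, hj⟩ := Finset.exists_mem_eq_sup' Finset.univ_nonempty fun j => ⟪x, t j - tbar⟫
  have := hgap ⟨x, hx⟩
  simp only [gap, hj, Submodule.coe_norm] at this
  linarith [inner_sub_sub_log_le_kliepLoss tbar t x j]

theorem exists_forall_kliepLoss_le (hmem : tbar ∈ intrinsicInterior ℝ (convexHull ℝ (range t))) :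
    ∃ Δ₀, ∀ Δ, kliepLoss tbar t Δ₀ ≤ kliepLoss tbar t Δ := by
  have htbar := intrinsicInterior_subset hmem
  have := nonempty_of_mem_convexHull_range htbar
  set V := vectorSpan ℝ (range t)
  obtain ⟨c, hc, hgrowth⟩ := exists_pos_mul_norm_sub_log_le_kliepLoss tbar t hmem
  obtain ⟨x₀, hx₀⟩ := ((continuous_kliepLoss tbar t).comp continuous_subtype_val
    ).exists_forall_le_of_le_add_mul_norm (f := fun x : V => kliepLoss tbar t x) (a := -log n) hc
      fun x => (le_of_eq (by rw [Submodule.coe_norm]; ring)).trans (hgrowth x x.2)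
  refine ⟨x₀, fun Δ => ?_⟩
  have hproj : kliepLoss tbar t (V.starProjection Δ) = kliepLoss tbar t Δ := by
    conv_rhs => rw [← add_sub_cancel (V.starProjection Δ) Δ]
    refine (kliepLoss_add_of_inner_eq tbar t (fun j => ?_) _).symm
    rw [← sub_eq_zero, ← inner_sub_right, real_inner_comm]
    exact Submodule.inner_right_of_mem_orthogonal
      (sub_mem_vectorSpan_of_mem_convexHull htbar (mem_range_self j))
      (V.sub_starProjection_mem_orthogonal Δ)
  exact (hx₀ ⟨_, V.starProjection_apply_mem Δ⟩).trans_eq hproj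

end Kliep

theorem penalized_kliep_attains_min_of_relint_general {k n : ℕ}
    (tbar : EuclideanSpace ℝ (Fin k)) (t : Fin n → EuclideanSpace ℝ (Fin k))
    (N : EuclideanSpace ℝ (Fin k) → ℝ)
    (hN_add : ∀ x y, N (x + y) ≤ N x + N y)
    (hN_smul : ∀ (c : ℝ) (x), N (c • x) = |c| * N x)
    (hN_zero : ∀ x, N x = 0 ↔ x = 0)
    (hmem : tbar ∈ intrinsicInterior ℝ (convexHull ℝ (Set.range t))) :
    ∀ lam : ℝ, 0 ≤ lam →
      ∃ Δ₀ : EuclideanSpace ℝ (Fin k), ∀ Δ : EuclideanSpace ℝ (Fin k),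
        kliepLoss tbar t Δ₀ + lam * N Δ₀ ≤ kliepLoss tbar t Δ + lam * N Δ := by
  intro lam hlam
  rcases hlam.eq_or_lt with rfl | hlam
  · simpa using exists_forall_kliepLoss_le tbar t hmem
  have htbar := intrinsicInterior_subset hmem
  have := nonempty_of_mem_convexHull_range htbar
  let p : Seminorm ℝ (EuclideanSpace ℝ (Fin k)) :=
    .of N hN_add fun c x => by rw [hN_smul, Real.norm_eq_abs]
  obtain ⟨c, hc, hpc⟩ := p.exists_pos_mul_norm_le fun x => (hN_zero x).1
  refine ((continuous_kliepLoss tbar t).add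
    (continuous_const.mul p.continuous_of_finiteDimensional)).exists_forall_le_of_le_add_mul_norm
      (f := fun Δ => kliepLoss tbar t Δ + lam * p Δ) (a := -log n) (mul_pos hlam hc) fun Δ => ?_
  have := mul_le_mul_of_nonneg_left (hpc Δ) hlam.le
  linarith [neg_log_le_kliepLoss tbar t htbar Δ]

/-- Theorem 2(i): if `t̄ ∈ relint(C)`, then for every `λ ≥ 0` the norm-penalized KLIEP loss
`ℓ(Δ) + λ·N(Δ)` attains a global minimum. -/
theorem penalized_kliep_attains_min_of_relint {k n : ℕ} (hk : 1 ≤ k) (hn : 1 ≤ n)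
    (tbar : EuclideanSpace ℝ (Fin k)) (t : Fin n → EuclideanSpace ℝ (Fin k))
    (N : EuclideanSpace ℝ (Fin k) → ℝ)
    (hN_add : ∀ x y, N (x + y) ≤ N x + N y)
    (hN_smul : ∀ (c : ℝ) (x), N (c • x) = |c| * N x)
    (hN_zero : ∀ x, N x = 0 ↔ x = 0)
    (hmem : tbar ∈ intrinsicInterior ℝ (convexHull ℝ (Set.range t))) :
    ∀ lam : ℝ, 0 ≤ lam →
      ∃ Δ₀ : EuclideanSpace ℝ (Fin k), ∀ Δ : EuclideanSpace ℝ (Fin k),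
        kliepLoss tbar t Δ₀ + lam * N Δ₀ ≤ kliepLoss tbar t Δ + lam * N Δ :=
  penalized_kliep_attains_min_of_relint_general tbar t N hN_add hN_smul hN_zero hmem
end

section
/- If t̄ ∉ C and λ = λ#, then the norm-penalized KLIEP loss ℓ_λ(Δ) = ℓ(Δ) + λ·N(Δ) is bounded from below: there exists M ∈ ℝ such that ℓ_λ(Δ) ≥ M for all Δ ∈ ℝ^k. (Theorem 2(iii)(b).) -/
open scoped RealInnerProductSpace

/-- The dual norm `N#(v) = sup { ⟪Δ, v⟫ : N(Δ) ≤ 1 }` of a norm `N` on `ℝ^k`. -/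
noncomputable def dualNorm {k : ℕ} (N : EuclideanSpace ℝ (Fin k) → ℝ)
    (v : EuclideanSpace ℝ (Fin k)) : ℝ :=
  sSup ((fun Δ : EuclideanSpace ℝ (Fin k) => ⟪Δ, v⟫) '' {Δ | N Δ ≤ 1})

/-!
Pick `s ∈ C` with `N#(t̄ - s) = λ`. A linear functional on `C` is maximized at some `t_j`, and
`log ((1/n) ∑ exp aᵢ) ≥ max aᵢ - log n`, so `ℓ(Δ) ≥ -⟪Δ, t̄ - s⟫ - log n`. The duality inequality
`⟪Δ, v⟫ ≤ N(Δ) N#(v)` then gives `ℓ(Δ) + λ N(Δ) ≥ -log n`. The supremum defining `N#` is finite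
because, by compactness of the Euclidean unit sphere, `N` dominates a multiple of `‖·‖`.
-/

namespace Seminorm

variable {E : Type*} [NormedAddCommGroup E] [NormedSpace ℝ E] [FiniteDimensional ℝ E]

theorem continuous_of_finiteDimensional_s12 (p : Seminorm ℝ E) : Continuous p :=
  continuousOn_univ.mp (p.convexOn.continuousOn isOpen_univ)

theorem exists_pos_mul_norm_le_s12 (p : Seminorm ℝ E) (hp : ∀ x, p x = 0 → x = 0) :
    ∃ m > 0, ∀ x, m * ‖x‖ ≤ p x := by
  rcases subsingleton_or_nontrivial E with hE | hE
  · exact ⟨1, one_pos, fun x => by simp [Subsingleton.elim x 0]⟩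
  -- `p` attains a minimum on the compact unit sphere, which is positive as `0` is not on it.
  obtain ⟨x₀, hx₀, hmin⟩ := (isCompact_sphere (0 : E) 1).exists_isMinOn
    (NormedSpace.sphere_nonempty.2 zero_le_one) p.continuous_of_finiteDimensional_s12.continuousOn
  have hx₀_ne : x₀ ≠ 0 := ne_zero_of_mem_unit_sphere ⟨x₀, hx₀⟩
  refine ⟨p x₀, (apply_nonneg p x₀).lt_of_ne fun h => hx₀_ne (hp x₀ h.symm), fun x => ?_⟩
  rcases eq_or_ne x 0 with rfl | hx
  · simp
  have hnorm : 0 < ‖x‖ := norm_pos_iff.2 hx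
  have hle : p x₀ ≤ ‖x‖⁻¹ * p x := by
    simpa [map_smul_eq_mul, abs_of_pos hnorm] using
      hmin (show ‖x‖⁻¹ • x ∈ Metric.sphere (0 : E) 1 by simp [norm_smul, hnorm.ne'])
  rwa [le_inv_mul_iff₀ hnorm, mul_comm] at hle

end Seminorm

theorem exists_le_inner_of_mem_convexHull {E ι : Type*} [NormedAddCommGroup E]
    [InnerProductSpace ℝ E] {t : ι → E} {s : E} (hs : s ∈ convexHull ℝ (Set.range t)) (Δ : E) :
    ∃ j, ⟪Δ, s⟫ ≤ ⟪Δ, t j⟫ := by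
  obtain ⟨_, ⟨j, rfl⟩, hj⟩ :=
    ((innerₗ E Δ).convexOn convex_univ).exists_ge_of_mem_convexHull (Set.subset_univ _) hs
  exact ⟨j, hj⟩

theorem sub_log_card_le_log_mean_exp {ι : Type*} [Fintype ι] (a : ι → ℝ) (j : ι) :
    a j - Real.log (Fintype.card ι) ≤
      Real.log (1 / (Fintype.card ι : ℝ) * ∑ i, Real.exp (a i)) := by
  have hcard : (0 : ℝ) < Fintype.card ι := by
    exact_mod_cast Fintype.card_pos_iff.2 ⟨j⟩
  calc a j - Real.log (Fintype.card ι)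
      = Real.log (1 / (Fintype.card ι : ℝ) * Real.exp (a j)) := by
        rw [Real.log_mul (by positivity) (Real.exp_pos _).ne', Real.log_exp, one_div,
          Real.log_inv]
        ring
    _ ≤ Real.log (1 / (Fintype.card ι : ℝ) * ∑ i, Real.exp (a i)) := by
      gcongr
      exact Finset.single_le_sum (fun i _ => (Real.exp_pos (a i)).le) (Finset.mem_univ j)

theorem neg_inner_sub_sub_log_le_kliepLoss {k n : ℕ} (tbar : EuclideanSpace ℝ (Fin k))
    (t : Fin n → EuclideanSpace ℝ (Fin k)) {s : EuclideanSpace ℝ (Fin k)}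
    (hs : s ∈ convexHull ℝ (Set.range t)) (Δ : EuclideanSpace ℝ (Fin k)) :
    -⟪Δ, tbar - s⟫ - Real.log n ≤ kliepLoss tbar t Δ := by
  obtain ⟨j, hj⟩ := exists_le_inner_of_mem_convexHull hs Δ
  have hlse := sub_log_card_le_log_mean_exp (fun i => ⟪Δ, t i⟫) j
  rw [Fintype.card_fin] at hlse
  rw [kliepLoss, inner_sub_right]
  linarith

theorem bddAbove_inner_image_le_one {E : Type*} [NormedAddCommGroup E] [InnerProductSpace ℝ E]
    [FiniteDimensional ℝ E] (p : Seminorm ℝ E) (hp : ∀ x, p x = 0 → x = 0) (v : E) :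
    BddAbove ((fun Δ => ⟪Δ, v⟫) '' {Δ | p Δ ≤ 1}) := by
  obtain ⟨m, hm, hmp⟩ := p.exists_pos_mul_norm_le_s12 hp
  refine ⟨m⁻¹ * ‖v‖, ?_⟩
  rintro _ ⟨Δ, hΔ, rfl⟩
  have hΔm : ‖Δ‖ ≤ m⁻¹ := by
    rw [← one_div, le_div_iff₀' hm]
    exact (hmp Δ).trans hΔ
  calc ⟪Δ, v⟫ ≤ ‖Δ‖ * ‖v‖ := real_inner_le_norm Δ v
    _ ≤ m⁻¹ * ‖v‖ := by gcongr

theorem inner_le_mul_dualNorm {k : ℕ} (p : Seminorm ℝ (EuclideanSpace ℝ (Fin k)))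
    (hp : ∀ x, p x = 0 → x = 0) (Δ v : EuclideanSpace ℝ (Fin k)) :
    ⟪Δ, v⟫ ≤ p Δ * dualNorm p v := by
  rcases eq_or_ne Δ 0 with rfl | hΔ
  · simp
  have hpΔ : 0 < p Δ := (apply_nonneg p Δ).lt_of_ne fun h => hΔ (hp Δ h.symm)
  have hle : ⟪(p Δ)⁻¹ • Δ, v⟫ ≤ dualNorm p v :=
    le_csSup (bddAbove_inner_image_le_one p hp v)
      ⟨(p Δ)⁻¹ • Δ, by simp [map_smul_eq_mul, abs_of_pos hpΔ, hpΔ.ne'], rfl⟩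
  rwa [real_inner_smul_left, inv_mul_le_iff₀ hpΔ] at hle

theorem penalized_kliep_bddBelow_of_eq_dual_dist_general {k n : ℕ}
    (tbar : EuclideanSpace ℝ (Fin k)) (t : Fin n → EuclideanSpace ℝ (Fin k))
    (N : EuclideanSpace ℝ (Fin k) → ℝ)
    (hN_add : ∀ x y, N (x + y) ≤ N x + N y)
    (hN_smul : ∀ (c : ℝ) (x), N (c • x) = |c| * N x)
    (hN_zero : ∀ x, N x = 0 ↔ x = 0)
    (lam : ℝ)
    (hlam : IsLeast ((fun s => dualNorm N (tbar - s)) '' convexHull ℝ (Set.range t)) lam) :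
    ∃ M : ℝ, ∀ Δ : EuclideanSpace ℝ (Fin k),
      M ≤ kliepLoss tbar t Δ + lam * N Δ := by
  let p : Seminorm ℝ (EuclideanSpace ℝ (Fin k)) :=
    Seminorm.of N hN_add fun c x => by rw [hN_smul, Real.norm_eq_abs]
  obtain ⟨s, hs, hs_lam⟩ := hlam.1
  refine ⟨-Real.log n, fun Δ => ?_⟩
  have hloss := neg_inner_sub_sub_log_le_kliepLoss tbar t hs Δ
  have hdual : ⟪Δ, tbar - s⟫ ≤ N Δ * lam :=
    hs_lam ▸ inner_le_mul_dualNorm p (fun x => (hN_zero x).1) Δ (tbar - s)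
  linarith

/-- Theorem 2(iii)(b): if `t̄ ∉ C` and `λ = λ#` (the dual-norm distance from `t̄` to `C`),
then the norm-penalized KLIEP loss `ℓ(Δ) + λ#·N(Δ)` is bounded from below. -/
theorem penalized_kliep_bddBelow_of_eq_dual_dist {k n : ℕ} (hk : 1 ≤ k) (hn : 1 ≤ n)
    (tbar : EuclideanSpace ℝ (Fin k)) (t : Fin n → EuclideanSpace ℝ (Fin k))
    (N : EuclideanSpace ℝ (Fin k) → ℝ)
    (hN_add : ∀ x y, N (x + y) ≤ N x + N y)
    (hN_smul : ∀ (c : ℝ) (x), N (c • x) = |c| * N x)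
    (hN_zero : ∀ x, N x = 0 ↔ x = 0)
    (hout : tbar ∉ convexHull ℝ (Set.range t))
    (lam : ℝ)
    (hlam : IsLeast ((fun s => dualNorm N (tbar - s)) '' convexHull ℝ (Set.range t)) lam) :
    ∃ M : ℝ, ∀ Δ : EuclideanSpace ℝ (Fin k),
      M ≤ kliepLoss tbar t Δ + lam * N Δ :=
  penalized_kliep_bddBelow_of_eq_dual_dist_general tbar t N hN_add hN_smul hN_zero lam hlam
end

section
/- If t̄ ∉ C and 0 ≤ λ < λ#, then the norm-penalized KLIEP loss ℓ_λ(Δ) = ℓ(Δ) + λ·N(Δ) is unbounded from below: for every M ∈ ℝ there exists Δ ∈ ℝ^k with ℓ_λ(Δ) < M. (Theorem 2(iii)(c).) -/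
/-!
Since `λ' < λ#`, the compact convex set `t̄ - C` misses the closed `λ'`-ball of the dual of `N`,
so a hyperplane strictly separates them: some `Δ` satisfies `⟪Δ, t̄ - s⟫ ≥ λ' N(Δ) + ε` on `C`.
Here Hahn–Banach enters a second time, through a norming functional of `Δ`, which shows that
`⟪Δ, ·⟫` reaches `λ' N(Δ)` on that ball. Along the ray `c Δ` the log-mean-exp term is at most
`c · maxⱼ ⟪Δ, tⱼ⟫`, so `ℓ(c Δ) + λ' N(c Δ) ≤ -c ε → -∞`.
-/

open scoped RealInnerProductSpace

open Pointwise

namespace Seminorm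

variable {E : Type*} [NormedAddCommGroup E] [InnerProductSpace ℝ E]

def dualClosedBall (p : Seminorm ℝ E) (r : ℝ) : Set E :=
  {w | ∀ y, p y ≤ 1 → ⟪y, w⟫ ≤ r}

theorem convex_dualClosedBall (p : Seminorm ℝ E) (r : ℝ) : Convex ℝ (p.dualClosedBall r) := by
  intro w₁ hw₁ w₂ hw₂ a b ha hb hab y hy
  rw [inner_add_right, real_inner_smul_right, real_inner_smul_right]
  calc a * ⟪y, w₁⟫ + b * ⟪y, w₂⟫ ≤ a * r + b * r := by
        gcongr
        exacts [hw₁ y hy, hw₂ y hy]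
    _ = r := by rw [← add_mul, hab, one_mul]

theorem isClosed_dualClosedBall (p : Seminorm ℝ E) (r : ℝ) : IsClosed (p.dualClosedBall r) := by
  simp only [dualClosedBall, Set.ofPred_forall]
  exact isClosed_iInter fun y => isClosed_iInter fun _ =>
    isClosed_le (continuous_const.inner continuous_id) continuous_const

theorem exists_inner_le_and_inner_eq [FiniteDimensional ℝ E] (p : Seminorm ℝ E) (x : E) :
    ∃ w : E, (∀ y, ⟪y, w⟫ ≤ p y) ∧ ⟪x, w⟫ = p x := by
  let f : E →ₗ.[ℝ] ℝ := LinearPMap.mkSpanSingleton' x (p x) fun c hc => by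
    rcases smul_eq_zero.1 hc with rfl | rfl <;> simp
  have hf : ∀ y : f.domain, f y ≤ p y := by
    rintro ⟨y, hy⟩
    obtain ⟨c, rfl⟩ := Submodule.mem_span_singleton.1 hy
    rw [LinearPMap.mkSpanSingleton'_apply, map_smul_eq_mul, smul_eq_mul, Real.norm_eq_abs]
    exact mul_le_mul_of_nonneg_right (le_abs_self c) (apply_nonneg p x)
  obtain ⟨g, hgf, hgp⟩ := exists_extension_of_le_sublinear f p
    (fun c hc y => by rw [map_smul_eq_mul, Real.norm_of_nonneg hc.le]) (map_add_le_add p) hf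
  refine ⟨(InnerProductSpace.toDual ℝ E).symm (LinearMap.toContinuousLinearMap g), fun y => ?_, ?_⟩
  · rw [real_inner_comm, InnerProductSpace.toDual_symm_apply]
    exact hgp y
  · rw [real_inner_comm, InnerProductSpace.toDual_symm_apply]
    exact (hgf ⟨x, Submodule.mem_span_singleton_self x⟩).trans
      (LinearPMap.mkSpanSingleton'_apply_self _ _ _ _)

theorem exists_add_le_inner_of_disjoint_dualClosedBall [FiniteDimensional ℝ E]
    (p : Seminorm ℝ E) {D : Set E} (hD : Convex ℝ D) (hDc : IsCompact D) {r : ℝ} (hr : 0 ≤ r)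
    (hdisj : Disjoint (p.dualClosedBall r) D) :
    ∃ Δ : E, ∃ ε > 0, ∀ d ∈ D, r * p Δ + ε ≤ ⟪Δ, d⟫ := by
  obtain ⟨f, u, v, hfB, huv, hfD⟩ := geometric_hahn_banach_closed_compact
    (p.convex_dualClosedBall r) (p.isClosed_dualClosedBall r) hD hDc hdisj
  set Δ := (InnerProductSpace.toDual ℝ E).symm f
  have hΔ : ∀ z, ⟪Δ, z⟫ = f z := fun z => InnerProductSpace.toDual_symm_apply
  obtain ⟨w, hwp, hwΔ⟩ := p.exists_inner_le_and_inner_eq Δ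
  have hrw : r • w ∈ p.dualClosedBall r := fun y hy => by
    rw [real_inner_smul_right]
    exact (mul_le_mul_of_nonneg_left (hwp y) hr).trans (mul_le_of_le_one_right hr hy)
  refine ⟨Δ, v - u, sub_pos.2 huv, fun d hd => ?_⟩
  have hfw := hfB _ hrw
  rw [← hΔ, real_inner_smul_right, hwΔ] at hfw
  linarith [hfD d hd, hΔ d]

end Seminorm

theorem kliepLoss_le_neg_of_le_inner_sub {k n : ℕ} [NeZero n] (tbar : EuclideanSpace ℝ (Fin k))
    (t : Fin n → EuclideanSpace ℝ (Fin k)) (Δ : EuclideanSpace ℝ (Fin k)) {m : ℝ}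
    (h : ∀ j, m ≤ ⟪Δ, tbar - t j⟫) : kliepLoss tbar t Δ ≤ -m := by
  have hmean : (1 / (n : ℝ)) * ∑ j, Real.exp ⟪Δ, t j⟫ ≤ Real.exp (⟪Δ, tbar⟫ - m) := by
    calc (1 / (n : ℝ)) * ∑ j, Real.exp ⟪Δ, t j⟫
        ≤ (1 / (n : ℝ)) * ∑ _j : Fin n, Real.exp (⟪Δ, tbar⟫ - m) := by
          gcongr with j
          linarith [h j, inner_sub_right (𝕜 := ℝ) Δ tbar (t j)]
      _ = Real.exp (⟪Δ, tbar⟫ - m) := by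
          rw [Finset.sum_const, Finset.card_univ, Fintype.card_fin, nsmul_eq_mul, ← mul_assoc,
            one_div_mul_cancel (NeZero.ne _), one_mul]
  have hpos : 0 < (1 / (n : ℝ)) * ∑ j, Real.exp ⟪Δ, t j⟫ :=
    mul_pos (one_div_pos.2 (Nat.cast_pos.2 (Nat.pos_of_neZero n)))
      (Finset.sum_pos (fun j _ => Real.exp_pos _) Finset.univ_nonempty)
  have hlog := Real.log_le_log hpos hmean
  rw [Real.log_exp] at hlog
  rw [kliepLoss]
  linarith

theorem kliepLoss_smul_add_le {k n : ℕ} [NeZero n] (tbar : EuclideanSpace ℝ (Fin k))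
    (t : Fin n → EuclideanSpace ℝ (Fin k)) (p : Seminorm ℝ (EuclideanSpace ℝ (Fin k)))
    {Δ : EuclideanSpace ℝ (Fin k)} {r ε : ℝ} (hΔ : ∀ j, r * p Δ + ε ≤ ⟪Δ, tbar - t j⟫)
    {c : ℝ} (hc : 0 ≤ c) : kliepLoss tbar t (c • Δ) + r * p (c • Δ) ≤ -(c * ε) := by
  have hloss : kliepLoss tbar t (c • Δ) ≤ -(c * (r * p Δ + ε)) :=
    kliepLoss_le_neg_of_le_inner_sub tbar t _ fun j => by
      rw [real_inner_smul_left]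
      exact mul_le_mul_of_nonneg_left (hΔ j) hc
  rw [map_smul_eq_mul, Real.norm_of_nonneg hc]
  linarith

theorem dualNorm_le_of_mem_dualClosedBall {k : ℕ} {p : Seminorm ℝ (EuclideanSpace ℝ (Fin k))}
    {r : ℝ} {w : EuclideanSpace ℝ (Fin k)} (hw : w ∈ p.dualClosedBall r) : dualNorm p w ≤ r :=
  csSup_le ⟨_, 0, by simp, rfl⟩ fun _ ⟨y, hy, hyw⟩ => hyw ▸ hw y hy

theorem penalized_kliep_unbounded_of_lt_dual_dist_general {k n : ℕ}
    (tbar : EuclideanSpace ℝ (Fin k)) (t : Fin n → EuclideanSpace ℝ (Fin k))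
    (N : EuclideanSpace ℝ (Fin k) → ℝ)
    (hN_add : ∀ x y, N (x + y) ≤ N x + N y)
    (hN_smul : ∀ (c : ℝ) (x), N (c • x) = |c| * N x)
    (lam : ℝ)
    (hlam : IsLeast ((fun s => dualNorm N (tbar - s)) '' convexHull ℝ (Set.range t)) lam) :
    ∀ lam' : ℝ, 0 ≤ lam' → lam' < lam →
      ∀ M : ℝ, ∃ Δ : EuclideanSpace ℝ (Fin k),
        kliepLoss tbar t Δ + lam' * N Δ < M := by
  intro lam' hlam'0 hlam' M
  let p : Seminorm ℝ (EuclideanSpace ℝ (Fin k)) := Seminorm.of N hN_add hN_smul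
  set C := convexHull ℝ (Set.range t)
  have : NeZero n := ⟨by
    rintro rfl
    obtain ⟨_, hs, -⟩ := hlam.1
    simp [C] at hs⟩
  have hdisj : Disjoint (p.dualClosedBall lam') (({tbar} : Set _) - C) := by
    refine Set.disjoint_right.2 ?_
    rintro _ ⟨_, hx, s, hs, rfl⟩ hw
    rw [Set.mem_singleton_iff.1 hx] at hw
    have hlam_le : lam ≤ dualNorm N (tbar - s) := hlam.2 ⟨s, hs, rfl⟩
    have hle_lam' : dualNorm N (tbar - s) ≤ lam' := dualNorm_le_of_mem_dualClosedBall (p := p) hw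
    linarith
  have hCc : IsCompact C := (Set.finite_range t).isCompact_convexHull ℝ
  obtain ⟨Δ, ε, hε, hΔ⟩ := p.exists_add_le_inner_of_disjoint_dualClosedBall
    ((convex_singleton tbar).sub (convex_convexHull ℝ _))
    (by rw [Set.singleton_sub]; exact hCc.image (by fun_prop)) hlam'0 hdisj
  refine ⟨((|M| + 1) / ε) • Δ, ?_⟩
  calc kliepLoss tbar t (((|M| + 1) / ε) • Δ) + lam' * N (((|M| + 1) / ε) • Δ)
      ≤ -((|M| + 1) / ε * ε) := kliepLoss_smul_add_le tbar t p
        (fun j => hΔ _ (Set.sub_mem_sub rfl (subset_convexHull ℝ _ ⟨j, rfl⟩))) (by positivity)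
    _ < M := by
      rw [div_mul_cancel₀ _ hε.ne']
      linarith [neg_abs_le M]

/-- Theorem 2(iii)(c): if `t̄ ∉ C` and `0 ≤ λ < λ#` (the dual-norm distance from `t̄` to `C`),
then the norm-penalized KLIEP loss `ℓ(Δ) + λ·N(Δ)` is unbounded from below. -/
theorem penalized_kliep_unbounded_of_lt_dual_dist {k n : ℕ} (hk : 1 ≤ k) (hn : 1 ≤ n)
    (tbar : EuclideanSpace ℝ (Fin k)) (t : Fin n → EuclideanSpace ℝ (Fin k))
    (N : EuclideanSpace ℝ (Fin k) → ℝ)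
    (hN_add : ∀ x y, N (x + y) ≤ N x + N y)
    (hN_smul : ∀ (c : ℝ) (x), N (c • x) = |c| * N x)
    (hN_zero : ∀ x, N x = 0 ↔ x = 0)
    (hout : tbar ∉ convexHull ℝ (Set.range t))
    (lam : ℝ)
    (hlam : IsLeast ((fun s => dualNorm N (tbar - s)) '' convexHull ℝ (Set.range t)) lam) :
    ∀ lam' : ℝ, 0 ≤ lam' → lam' < lam →
      ∀ M : ℝ, ∃ Δ : EuclideanSpace ℝ (Fin k),
        kliepLoss tbar t Δ + lam' * N Δ < M :=
  penalized_kliep_unbounded_of_lt_dual_dist_general tbar t N hN_add hN_smul lam hlam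
end
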